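/- arXiv:2111.13745 — 2 statements merged into one kernel-verified Lean document; each statement's English description precedes it below -/
import Mathlib

section
/- Let p ≥ 2 be an integer, I ⊆ {0,1,...,p−1}, and n ≥ 2. For every 0 ≤ k < p^n, writing k = p·b + d with integers b, d and 0 ≤ d < p, one has π_{p^n,I}(k) = p·π_{p^{n−1},I}(b) + d if b ∈ I_{p^{n−1}}, and π_{p^n,I}(k) = p·π_{p^{n−1},I}(b) + (p − d − 1) if b ∉ I_{p^{n−1}}. -/
/-!
On the piece `(k/p^m, (k+1)/p^m)` the iterate `g_{p,I}^m` is affine with slope `±p^m`, and the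
sign is computed by peeling off the leading base-`p` digit `a` of `k`: the first application of
`g_{p,I}` maps the piece onto a piece of level `m - 1`, keeping the orientation if `a ∈ I` and
reversing it (and reflecting the index `r ↦ p^{m-1} - r - 1`) otherwise. This is the same recursion
that defines `π_{p^m,I}`, and an induction on `m` that peels off the leading digit of both sides
turns it into the stated recursion on the trailing digit.
-/

/-- The (not necessarily continuous) piecewise linear map `g_{p,I} : [0,1] → [0,1]`:
on `[k/p, (k+1)/p)` it is `x ↦ p·x − k` if `k ∈ I` and `x ↦ k + 1 − p·x` if `k ∉ I`,
with `g_{p,I}(1) = 1` if `p − 1 ∈ I` and `g_{p,I}(1) = 0` otherwise. -/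
noncomputable def gpI (p : ℕ) (I : Finset ℕ) (x : ℝ) : ℝ :=
  if x = 1 then (if p - 1 ∈ I then 1 else 0)
  else if (⌊(p : ℝ) * x⌋).toNat ∈ I then (p : ℝ) * x - (⌊(p : ℝ) * x⌋).toNat
  else ((⌊(p : ℝ) * x⌋).toNat : ℝ) + 1 - (p : ℝ) * x

/-- `I_{p^n}` is the set of indices `k < p^n` such that the `n`-fold iterate of `g_{p,I}`
is increasing on `(k/p^n, (k+1)/p^n)`, where it is given by `x ↦ p^n·x − k`. -/
def ISet (p : ℕ) (I : Finset ℕ) (n : ℕ) : Set ℕ :=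
  {k | k < p ^ n ∧ ∀ x ∈ Set.Ioo ((k : ℝ) / (p : ℝ) ^ n) (((k : ℝ) + 1) / (p : ℝ) ^ n),
    (gpI p I)^[n] x = (p : ℝ) ^ n * x - (k : ℝ)}

/-- The permutation `π_{p^n, I}` of `{0, …, p^n − 1}`: `π_{p^1,I}` is the identity, and for
`a·p^{n−1} ≤ k < (a+1)·p^{n−1}`, `π_{p^n,I}(k) = a·p^{n−1} + π_{p^{n−1},I}(k − a·p^{n−1})`
if `a ∈ I`, and `π_{p^n,I}(k) = a·p^{n−1} + π_{p^{n−1},I}(p^{n−1} − (k − a·p^{n−1}) − 1)`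
if `a ∉ I`. -/
def piPowI (p : ℕ) (I : Finset ℕ) : ℕ → ℕ → ℕ
  | 0, k => k
  | n + 1, k =>
    if k / p ^ n ∈ I then k / p ^ n * p ^ n + piPowI p I n (k % p ^ n)
    else k / p ^ n * p ^ n + piPowI p I n (p ^ n - k % p ^ n - 1)

open Set

def pieceIncreasing (p : ℕ) (I : Finset ℕ) : ℕ → ℕ → Bool
  | 0, _ => true
  | m + 1, k =>
    if k / p ^ m ∈ I then pieceIncreasing p I m (k % p ^ m)
    else !pieceIncreasing p I m (p ^ m - k % p ^ m - 1)

lemma mul_sub_sub_one_eq {p M r : ℕ} (hr : r < p * M) :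
    p * M - r - 1 = p * (M - r / p - 1) + (p - r % p - 1) := by
  have hp : 0 < p := Nat.pos_of_mul_pos_right (Nat.zero_lt_of_lt hr)
  have hq : r / p < M := (Nat.div_lt_iff_lt_mul hp).2 (by rwa [mul_comm])
  obtain ⟨c, rfl⟩ : ∃ c, M = r / p + 1 + c := ⟨M - r / p - 1, by omega⟩
  have hd := Nat.mod_lt r hp
  have hr := Nat.div_add_mod r p
  rw [show r / p + 1 + c - r / p - 1 = c by omega, mul_add, mul_add]
  omega

lemma mul_sub_sub_one_div {p M r : ℕ} (hr : r < p * M) :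
    (p * M - r - 1) / p = M - r / p - 1 := by
  have hp : 0 < p := Nat.pos_of_mul_pos_right (Nat.zero_lt_of_lt hr)
  rw [mul_sub_sub_one_eq hr, Nat.mul_add_div hp, Nat.div_eq_of_lt (show p - r % p - 1 < p by omega),
    add_zero]

lemma mul_sub_sub_one_mod {p M r : ℕ} (hr : r < p * M) :
    (p * M - r - 1) % p = p - r % p - 1 := by
  have hp : 0 < p := Nat.pos_of_mul_pos_right (Nat.zero_lt_of_lt hr)
  rw [mul_sub_sub_one_eq hr, Nat.mul_add_mod, Nat.mod_eq_of_lt (by omega)]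

section Dynamics

variable {p : ℕ} (I : Finset ℕ)

lemma gpI_add_div (hp : 0 < p) (a : ℕ) {u : ℝ} (hu : u ∈ Ioo 0 1) :
    gpI p I ((a + u) / p) = if a ∈ I then u else 1 - u := by
  have hpR : (0 : ℝ) < p := by exact_mod_cast hp
  have hpx : (p : ℝ) * ((a + u) / p) = a + u := by field_simp
  have hfloor : ⌊(a : ℝ) + u⌋ = a := by
    rw [Int.floor_eq_iff]; push_cast; constructor <;> linarith [hu.1, hu.2]
  -- `a + u` is not an integer, so `(a + u) / p ≠ 1`
  have hne : (a + u) / p ≠ 1 := by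
    intro h
    rw [h, mul_one] at hpx
    have := congrArg Int.floor hpx
    rw [hfloor, Int.floor_natCast] at this
    have : (p : ℝ) = a := by exact_mod_cast this
    linarith [hu.1, hu.2]
  simp only [gpI, if_neg hne, hpx, hfloor, Int.toNat_natCast]
  split_ifs <;> ring

theorem iterate_gpI_add_div_pow (hp : 0 < p) {m k : ℕ} (hk : k < p ^ m) {t : ℝ}
    (ht : t ∈ Ioo 0 1) :
    (gpI p I)^[m] ((k + t) / (p : ℝ) ^ m) =
      if pieceIncreasing p I m k then t else 1 - t := by
  induction m generalizing k t with
  | zero => simp_all [pieceIncreasing]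
  | succ m ih =>
    rw [pieceIncreasing]
    have hpm : (0 : ℝ) < (p : ℝ) ^ m := by positivity
    set a := k / p ^ m
    set r := k % p ^ m
    have hr : r < p ^ m := Nat.mod_lt _ (by positivity)
    have hrR : (r : ℝ) + 1 ≤ (p : ℝ) ^ m := by exact_mod_cast hr
    have hkR : (k : ℝ) = p ^ m * a + r := by exact_mod_cast (Nat.div_add_mod k (p ^ m)).symm
    have hu : (r + t) / (p : ℝ) ^ m ∈ Ioo 0 1 := by
      constructor
      · exact div_pos (by linarith [ht.1, r.cast_nonneg (α := ℝ)]) hpm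
      · rw [div_lt_one hpm]; linarith [ht.2]
    have hx : (k + t) / (p : ℝ) ^ (m + 1) = (a + (r + t) / (p : ℝ) ^ m) / p := by
      rw [hkR]; field_simp; ring
    rw [Function.iterate_succ_apply, hx, gpI_add_div I hp a hu]
    by_cases ha : a ∈ I
    · simp only [if_pos ha, ih hr ht]
    · have hs :
          1 - (r + t) / (p : ℝ) ^ m = ((p ^ m - r - 1 : ℕ) + (1 - t)) / (p : ℝ) ^ m := by
        rw [Nat.cast_sub (by omega), Nat.cast_sub hr.le]; field_simp; push_cast; ring
      have ht' : 1 - t ∈ Ioo (0 : ℝ) 1 := ⟨by linarith [ht.2], by linarith [ht.1]⟩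
      simp only [if_neg ha, hs, ih (k := p ^ m - r - 1) (by clear_value r; omega) ht']
      cases pieceIncreasing p I m (p ^ m - r - 1) <;> simp

theorem mem_ISet_iff (hp : 0 < p) (m k : ℕ) :
    k ∈ ISet p I m ↔ k < p ^ m ∧ pieceIncreasing p I m k = true := by
  have hpm : (0 : ℝ) < (p : ℝ) ^ m := by positivity
  refine and_congr_right fun hk => ⟨fun h => ?_, fun h x hx => ?_⟩
  · -- any `t ≠ 1/2` tells `t` and `1 - t` apart
    have hthird : ((k : ℝ) + 1 / 3) / (p : ℝ) ^ m ∈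
        Ioo ((k : ℝ) / (p : ℝ) ^ m) (((k : ℝ) + 1) / (p : ℝ) ^ m) :=
      ⟨by gcongr; norm_num, by gcongr; norm_num⟩
    have heq := h _ hthird
    rw [iterate_gpI_add_div_pow I hp hk (by norm_num : (1 / 3 : ℝ) ∈ Ioo 0 1),
      mul_div_cancel₀ _ hpm.ne'] at heq
    by_contra hdec
    rw [if_neg hdec] at heq
    linarith
  · have ht : (p : ℝ) ^ m * x - k ∈ Ioo 0 1 := by
      obtain ⟨hx₁, hx₂⟩ := hx
      rw [div_lt_iff₀ hpm] at hx₁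
      rw [lt_div_iff₀ hpm] at hx₂
      constructor <;> linarith
    have hx : x = (k + ((p : ℝ) ^ m * x - k)) / (p : ℝ) ^ m := by field_simp; ring
    conv_lhs => rw [hx]
    rw [iterate_gpI_add_div_pow I hp hk ht, if_pos h]

end Dynamics

theorem piPowI_succ_eq_mul_add {p : ℕ} (hp : 0 < p) (I : Finset ℕ) (m k : ℕ) :
    piPowI p I (m + 1) k = p * piPowI p I m (k / p) +
      if pieceIncreasing p I m (k / p) then k % p else p - k % p - 1 := by
  induction m generalizing k with
  | zero => simpa [piPowI, pieceIncreasing, Nat.mod_one] using (Nat.div_add_mod k p).symm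
  | succ m ih =>
    rw [piPowI.eq_2 p I k (m + 1), piPowI.eq_2 p I (k / p) m, pieceIncreasing.eq_2 p I (k / p) m]
    set a := k / p ^ (m + 1)
    set r := k % p ^ (m + 1)
    have hpow : p ^ (m + 1) = p * p ^ m := pow_succ' p m
    have hr : r < p * p ^ m := hpow ▸ Nat.mod_lt _ (by positivity)
    have hdiv : k / p / p ^ m = a := by rw [Nat.div_div_eq_div_mul, ← hpow]
    have hmod : k / p % p ^ m = r / p := by rw [← Nat.mod_mul_right_div_self, ← hpow]
    have hmodp : r % p = k % p := Nat.mod_mod_of_dvd _ (dvd_pow_self p m.succ_ne_zero)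
    rw [hdiv, hmod, hpow]
    by_cases ha : a ∈ I
    · rw [if_pos ha, if_pos ha, if_pos ha, ih r, hmodp]
      ring
    · rw [if_neg ha, if_neg ha, if_neg ha, ih, mul_sub_sub_one_div hr, mul_sub_sub_one_mod hr,
        hmodp]
      have hflip : p - (p - k % p - 1) - 1 = k % p := by
        have := Nat.mod_lt k hp
        omega
      cases pieceIncreasing p I m (p ^ m - r / p - 1) <;> simp only [hflip] <;> simp <;> ring

theorem piPowI_recursion_general (p n : ℕ) (hp : 2 ≤ p) (hn : 2 ≤ n) (I : Finset ℕ) :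
    ∀ k < p ^ n,
      (k / p ∈ ISet p I (n - 1) →
        piPowI p I n k = p * piPowI p I (n - 1) (k / p) + k % p) ∧
      (k / p ∉ ISet p I (n - 1) →
        piPowI p I n k = p * piPowI p I (n - 1) (k / p) + (p - k % p - 1)) := by
  obtain ⟨m, rfl⟩ : ∃ m, n = m + 1 := ⟨n - 1, by omega⟩
  intro k hk
  have hp0 : 0 < p := by omega
  have hkp : k / p < p ^ m := (Nat.div_lt_iff_lt_mul hp0).2 (pow_succ p m ▸ hk)
  rw [Nat.add_sub_cancel, mem_ISet_iff I hp0, piPowI_succ_eq_mul_add hp0]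
  constructor
  · rintro ⟨-, hinc⟩
    rw [if_pos hinc]
  · intro hdec
    rw [if_neg fun hinc => hdec ⟨hkp, hinc⟩]

/-- Recursive description of `π_{p^n,I}` from below: for `k = p·b + d` with `0 ≤ d < p`,
`π_{p^n,I}(k) = p·π_{p^{n−1},I}(b) + d` if `b ∈ I_{p^{n−1}}`, and
`π_{p^n,I}(k) = p·π_{p^{n−1},I}(b) + (p − d − 1)` if `b ∉ I_{p^{n−1}}`. -/
theorem piPowI_recursion (p n : ℕ) (hp : 2 ≤ p) (hn : 2 ≤ n)
    (I : Finset ℕ) (hI : ∀ i ∈ I, i < p) :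
    ∀ k < p ^ n,
      (k / p ∈ ISet p I (n - 1) →
        piPowI p I n k = p * piPowI p I (n - 1) (k / p) + k % p) ∧
      (k / p ∉ ISet p I (n - 1) →
        piPowI p I n k = p * piPowI p I (n - 1) (k / p) + (p - k % p - 1)) :=
  piPowI_recursion_general p n hp hn I
end

section
/- Let p be a prime, n ≥ 1, I ⊆ {0,1,...,p−1}, let x_0 < x_1 < ... < x_{p^n−1} be the p^n fixed points of the n-fold iterate g_{p,I}^n, and let α be a generator of the multiplicative group of the finite field F_{p^n}. Define B_{α,I} on the fixed points by B_{α,I}(x_k) = 0 for the unique k with π_{p^n,I}(k) = 0, and B_{α,I}(x_k) = α^{π_{p^n,I}(k)} for all other k. Then B_{α,I} is a bijection from {x ∈ [0,1] : g_{p,I}^n(x) = x} onto F_{p^n}, and (B_{α,I}(x_k))^p = B_{α,I}(g_{p,I}(x_k)) for every 0 ≤ k ≤ p^n − 1. -/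
/-!
Put `N = p ^ n`. For `j < N` let `k = π⁻¹(j)`; the candidate point with exponent `j` is the fixed
point `k/(N-1)` or `(k+1)/(N+1)` of the branch `x ↦ N x - k` or `x ↦ k + 1 - N x` of `g^n` over
`[k/N, (k+1)/N]`, the orientation being computed along with `π⁻¹` by the top-digit recursion.
Read from the bottom digit, the same recursion shows that `g` maps the candidate with exponent `j`
to the one whose exponent is the cyclic rotation of the `n` base-`p` digits of `j`. As `n`
rotations give the identity, the candidates are fixed by `g^n`; they increase with `k`, so they
are the `x_k`, and `x_k` has exponent `π(k)`. Finally the rotation of `j` is `p * j` modulo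
`N - 1 = orderOf α`, so on `B`-values `g` acts as `β ↦ β ^ p`.
-/

lemma Nat.ModEq.eq_of_pos_of_le {a b m : ℕ} (h : a ≡ b [MOD m]) (ha0 : 0 < a) (ha : a ≤ m)
    (hb0 : 0 < b) (hb : b ≤ m) : a = b := by
  have h' : a - 1 + 1 ≡ b - 1 + 1 [MOD m] := by
    rwa [Nat.sub_add_cancel ha0, Nat.sub_add_cancel hb0]
  have := (h'.add_right_cancel' 1).eq_of_lt_of_lt (by omega) (by omega)
  omega

lemma StrictMonoOn.eqOn_of_image_subset {α : Type*} [LinearOrder α] {f g : ℕ → α} {N : ℕ}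
    (hf : StrictMonoOn f (Set.Iio N)) (hg : StrictMonoOn g (Set.Iio N))
    (h : g '' Set.Iio N ⊆ f '' Set.Iio N) : Set.EqOn f g (Set.Iio N) := by
  have himage : f '' Set.Iio N = g '' Set.Iio N :=
    (Set.eq_of_subset_of_ncard_le h (by rw [hf.injOn.ncard_image, hg.injOn.ncard_image])
      ((Set.finite_Iio N).image f)).symm
  have hrange : Set.range (f ∘ Fin.val (n := N)) = Set.range (g ∘ Fin.val (n := N)) := by
    rwa [Set.range_comp, Set.range_comp, Fin.range_val]
  intro k hk
  exact congrFun ((StrictMono.range_inj (fun (i j : Fin N) hij ↦ hf i.2 j.2 hij)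
    (fun (i j : Fin N) hij ↦ hg i.2 j.2 hij)).1 hrange) ⟨k, hk⟩

section ZeroOrPow

variable {M₀ : Type*} [MonoidWithZero M₀]

def zeroOrPow (α : M₀ˣ) (j : ℕ) : M₀ := if j = 0 then 0 else (α : M₀) ^ j

lemma zeroOrPow_pow {α : M₀ˣ} {j j' q : ℕ} (hq : q ≠ 0) (h0 : j = 0 ↔ j' = 0)
    (hmod : j' ≡ q * j [MOD orderOf α]) : zeroOrPow α j ^ q = zeroOrPow α j' := by
  by_cases hj : j = 0
  · simp [zeroOrPow, hj, h0.1 hj, zero_pow hq]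
  · rw [zeroOrPow, zeroOrPow, if_neg hj, if_neg (mt h0.2 hj), ← pow_mul, mul_comm,
      ← Units.val_pow_eq_pow_val, ← Units.val_pow_eq_pow_val, pow_eq_pow_iff_modEq.2 hmod.symm]

variable {G₀ : Type*} [GroupWithZero G₀]

lemma orderOf_eq_natCard_sub_one {α : G₀ˣ} (hα : ∀ β : G₀ˣ, β ∈ Subgroup.zpowers α) :
    orderOf α = Nat.card G₀ - 1 := by
  rw [orderOf_eq_card_of_forall_mem_zpowers hα, Nat.card_units]

lemma zeroOrPow_injOn {α : G₀ˣ} (hα : ∀ β : G₀ˣ, β ∈ Subgroup.zpowers α) :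
    Set.InjOn (zeroOrPow α) (Set.Iio (Nat.card G₀)) := by
  intro j hj j' hj' h
  simp only [Set.mem_Iio] at hj hj'
  by_cases h0 : j = 0 <;> by_cases h0' : j' = 0 <;>
    simp only [zeroOrPow, h0, h0', if_true, if_false] at h
  · rw [h0, h0']
  · exact absurd h.symm (pow_ne_zero _ α.ne_zero)
  · exact absurd h (pow_ne_zero _ α.ne_zero)
  · rw [← Units.val_pow_eq_pow_val, ← Units.val_pow_eq_pow_val, Units.val_inj,
      pow_eq_pow_iff_modEq, orderOf_eq_natCard_sub_one hα] at h
    exact h.eq_of_pos_of_le (by omega) (by omega) (by omega) (by omega)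

lemma zeroOrPow_bijOn [Finite G₀] {α : G₀ˣ} (hα : ∀ β : G₀ˣ, β ∈ Subgroup.zpowers α) :
    Set.BijOn (zeroOrPow α) (Set.Iio (Nat.card G₀)) Set.univ := by
  refine ⟨Set.mapsTo_univ _ _, zeroOrPow_injOn hα, ?_⟩
  rw [Set.SurjOn, Set.univ_subset_iff]
  refine Set.eq_of_subset_of_ncard_le (Set.subset_univ _) ?_ (Set.toFinite _)
  rw [(zeroOrPow_injOn hα).ncard_image, Set.ncard_univ, Set.ncard_Iio_nat]

end ZeroOrPow

namespace GpI

lemma mul_pow_add_lt {p m a t : ℕ} (ha : a < p) (ht : t < p ^ m) :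
    a * p ^ m + t < p ^ (m + 1) := by
  rw [mul_comm, pow_succ']
  exact Nat.mul_add_lt_mul_of_lt_of_lt ha ht

lemma mul_pow_add_div_mod {p m a t : ℕ} (ht : t < p ^ m) :
    (a * p ^ m + t) / p ^ m = a ∧ (a * p ^ m + t) % p ^ m = t :=
  ⟨by rw [mul_comm, Nat.mul_add_div (by omega), Nat.div_eq_of_lt ht, add_zero],
    Nat.mul_add_mod_of_lt ht⟩

lemma exists_eq_mul_pow_add {p m j : ℕ} (hj : j < p ^ (m + 1)) :
    ∃ a < p, ∃ t < p ^ m, j = a * p ^ m + t := by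
  have hpm : 0 < p ^ m := Nat.pos_of_ne_zero fun h ↦ by simp [pow_succ, h] at hj
  exact ⟨j / p ^ m, Nat.div_lt_of_lt_mul (by rwa [← pow_succ]), j % p ^ m,
    Nat.mod_lt _ hpm, (Nat.div_add_mod' j _).symm⟩

def reflectIf (b : Bool) (P x : ℕ) : ℕ := bif b then P - 1 - x else x

lemma reflectIf_lt {b : Bool} {P x : ℕ} (hx : x < P) : reflectIf b P x < P := by
  cases b <;> (simp only [reflectIf, cond_true, cond_false]; omega)

lemma reflectIf_reflectIf_xor {b c : Bool} {P x : ℕ} (hx : x < P) :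
    reflectIf b P (reflectIf c P x) = reflectIf (b ^^ c) P x := by
  cases b <;> cases c <;> simp [reflectIf]
  omega

lemma reflectIf_reflectIf {b : Bool} {P x : ℕ} (hx : x < P) :
    reflectIf b P (reflectIf b P x) = x := by
  rw [reflectIf_reflectIf_xor hx, Bool.xor_self]
  rfl

lemma reflectIf_mul_add {b : Bool} {p P x c : ℕ} (hx : x < P) (hc : c < p) :
    reflectIf b (p * P) (p * x + c) = p * reflectIf b P x + reflectIf b p c := by
  cases b
  · rfl
  · obtain ⟨r, rfl⟩ := Nat.exists_eq_add_of_lt hx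
    obtain ⟨s, rfl⟩ := Nat.exists_eq_add_of_lt hc
    simp only [reflectIf, cond_true, Nat.sub_sub]
    rw [show x + r + 1 - (1 + x) = r by omega, show c + s + 1 - (1 + c) = s by omega]
    apply Nat.sub_eq_of_eq_add
    ring

variable (p : ℕ) (I : Finset ℕ)

def piInv : ℕ → ℕ → ℕ
  | 0, j => j
  | n + 1, j =>
    j / p ^ n * p ^ n + reflectIf (decide (j / p ^ n ∉ I)) (p ^ n) (piInv n (j % p ^ n))

/-- Whether `g_{p,I}^n` is decreasing on `[k/p^n, (k+1)/p^n)`, where `k = piInv p I n j`. -/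
def reversed : ℕ → ℕ → Bool
  | 0, _ => false
  | n + 1, j => decide (j / p ^ n ∉ I) ^^ reversed n (j % p ^ n)

/-- Rotates the `m + 1` base-`p` digits of `j < p ^ (m + 1)`, moving the leading one to the end. -/
def rotDigits (m j : ℕ) : ℕ := p * (j % p ^ m) + j / p ^ m

variable {p I}

section Digits

variable {m a t : ℕ}

lemma piPowI_succ (ht : t < p ^ m) :
    piPowI p I (m + 1) (a * p ^ m + t) =
      a * p ^ m + piPowI p I m (reflectIf (decide (a ∉ I)) (p ^ m) t) := by
  obtain ⟨hdiv, hmod⟩ := mul_pow_add_div_mod (a := a) ht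
  by_cases ha : a ∈ I
  · simp [piPowI, hdiv, hmod, ha, reflectIf]
  · simp [piPowI, hdiv, hmod, ha, reflectIf, Nat.sub_right_comm]

lemma piInv_succ (ht : t < p ^ m) :
    piInv p I (m + 1) (a * p ^ m + t) =
      a * p ^ m + reflectIf (decide (a ∉ I)) (p ^ m) (piInv p I m t) := by
  obtain ⟨hdiv, hmod⟩ := mul_pow_add_div_mod (a := a) ht
  rw [piInv, hdiv, hmod]

lemma reversed_succ (ht : t < p ^ m) :
    reversed p I (m + 1) (a * p ^ m + t) = (decide (a ∉ I) ^^ reversed p I m t) := by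
  obtain ⟨hdiv, hmod⟩ := mul_pow_add_div_mod (a := a) ht
  rw [reversed, hdiv, hmod]

lemma rotDigits_mul_pow_add (ht : t < p ^ m) : rotDigits p m (a * p ^ m + t) = p * t + a := by
  obtain ⟨hdiv, hmod⟩ := mul_pow_add_div_mod (a := a) ht
  rw [rotDigits, hdiv, hmod]

end Digits

lemma piPowI_lt : ∀ {n k : ℕ}, k < p ^ n → piPowI p I n k < p ^ n
  | 0, _, hk => hk
  | _ + 1, _, hk => by
    obtain ⟨a, ha, t, ht, rfl⟩ := exists_eq_mul_pow_add hk
    rw [piPowI_succ ht]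
    exact mul_pow_add_lt ha (piPowI_lt (reflectIf_lt ht))

lemma piInv_lt : ∀ {n j : ℕ}, j < p ^ n → piInv p I n j < p ^ n
  | 0, _, hj => hj
  | _ + 1, _, hj => by
    obtain ⟨a, ha, t, ht, rfl⟩ := exists_eq_mul_pow_add hj
    rw [piInv_succ ht]
    exact mul_pow_add_lt ha (reflectIf_lt (piInv_lt ht))

lemma piPowI_piInv : ∀ {n j : ℕ}, j < p ^ n → piPowI p I n (piInv p I n j) = j
  | 0, _, _ => rfl
  | _ + 1, _, hj => by
    obtain ⟨a, -, t, ht, rfl⟩ := exists_eq_mul_pow_add hj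
    rw [piInv_succ ht, piPowI_succ (reflectIf_lt (piInv_lt ht)),
      reflectIf_reflectIf (piInv_lt ht), piPowI_piInv ht]

lemma piInv_piPowI : ∀ {n k : ℕ}, k < p ^ n → piInv p I n (piPowI p I n k) = k
  | 0, _, _ => rfl
  | _ + 1, _, hk => by
    obtain ⟨a, -, t, ht, rfl⟩ := exists_eq_mul_pow_add hk
    rw [piPowI_succ ht, piInv_succ (piPowI_lt (reflectIf_lt ht)),
      piInv_piPowI (reflectIf_lt ht), reflectIf_reflectIf ht]

lemma bijOn_piPowI (n : ℕ) : Set.BijOn (piPowI p I n) (Set.Iio (p ^ n)) (Set.Iio (p ^ n)) :=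
  Set.InvOn.bijOn ⟨fun _ hk ↦ piInv_piPowI hk, fun _ hj ↦ piPowI_piInv hj⟩
    (fun _ hk ↦ piPowI_lt hk) (fun _ hj ↦ piInv_lt hj)

lemma mul_add_eq_mul_pow_add {m a t c : ℕ} :
    p * (a * p ^ m + t) + c = a * p ^ (m + 1) + (p * t + c) := by
  ring

lemma reversed_succ_low : ∀ {n s c : ℕ}, s < p ^ n → c < p →
    reversed p I (n + 1) (p * s + c) = (decide (c ∉ I) ^^ reversed p I n s)
  | 0, s, c, hs, _ => by
    obtain rfl : s = 0 := by simpa using hs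
    simp [reversed]
  | _ + 1, _, c, hs, hc => by
    obtain ⟨a, -, t, ht, rfl⟩ := exists_eq_mul_pow_add hs
    rw [mul_add_eq_mul_pow_add, reversed_succ (Nat.mul_add_lt_mul_of_lt_of_lt ht hc),
      reversed_succ_low ht hc, reversed_succ ht, Bool.xor_left_comm]

lemma piInv_succ_low : ∀ {n s c : ℕ}, s < p ^ n → c < p →
    piInv p I (n + 1) (p * s + c) = p * piInv p I n s + reflectIf (reversed p I n s) p c
  | 0, s, c, hs, _ => by
    obtain rfl : s = 0 := by simpa using hs
    simp [piInv, reversed, reflectIf, Nat.mod_one]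
  | _ + 1, _, c, hs, hc => by
    obtain ⟨a, -, t, ht, rfl⟩ := exists_eq_mul_pow_add hs
    rw [mul_add_eq_mul_pow_add, piInv_succ (Nat.mul_add_lt_mul_of_lt_of_lt ht hc),
      piInv_succ_low ht hc, pow_succ', reflectIf_mul_add (piInv_lt ht) (reflectIf_lt hc),
      reflectIf_reflectIf_xor hc, piInv_succ ht, reversed_succ ht]
    ring

section RotDigits

variable {m j : ℕ}

lemma rotDigits_lt (hj : j < p ^ (m + 1)) : rotDigits p m j < p ^ (m + 1) := by
  obtain ⟨a, ha, t, ht, rfl⟩ := exists_eq_mul_pow_add hj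
  rw [rotDigits_mul_pow_add ht]
  exact Nat.mul_add_lt_mul_of_lt_of_lt ht ha

lemma rotDigits_eq_zero_iff (hj : j < p ^ (m + 1)) : rotDigits p m j = 0 ↔ j = 0 := by
  obtain ⟨a, ha, t, ht, rfl⟩ := exists_eq_mul_pow_add hj
  rw [rotDigits_mul_pow_add ht]
  simp [Nat.add_eq_zero_iff, (show p ≠ 0 by omega), and_comm]

lemma rotDigits_modEq (hj : j < p ^ (m + 1)) :
    rotDigits p m j ≡ p * j [MOD p ^ (m + 1) - 1] := by
  obtain ⟨a, ha, t, ht, rfl⟩ := exists_eq_mul_pow_add hj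
  have hpow : 1 ≤ p ^ (m + 1) := Nat.one_le_pow _ _ (by omega)
  have key : p * (a * p ^ m + t) = p * t + a + a * (p ^ (m + 1) - 1) := by
    zify [hpow]
    ring
  rw [key, rotDigits_mul_pow_add ht]
  exact (Nat.add_mul_mod_self_right _ _ _).symm

lemma rotDigits_iterate_lt (hj : j < p ^ (m + 1)) (i : ℕ) :
    (rotDigits p m)^[i] j < p ^ (m + 1) :=
  Set.MapsTo.iterate (s := Set.Iio (p ^ (m + 1))) (fun _ ↦ rotDigits_lt) i hj

lemma rotDigits_iterate_modEq (hj : j < p ^ (m + 1)) (i : ℕ) :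
    (rotDigits p m)^[i] j ≡ p ^ i * j [MOD p ^ (m + 1) - 1] := by
  induction i with
  | zero => simp [Nat.ModEq.refl]
  | succ i ih =>
    rw [Function.iterate_succ_apply', pow_succ' p i, mul_assoc]
    exact (rotDigits_modEq (rotDigits_iterate_lt hj i)).trans (ih.mul_left p)

lemma rotDigits_iterate_self (hj : j < p ^ (m + 1)) : (rotDigits p m)^[m + 1] j = j := by
  rcases Nat.eq_zero_or_pos j with rfl | hj0
  · exact Function.iterate_fixed (by simp [rotDigits]) _
  have hmaps : Set.MapsTo (rotDigits p m) {i | 0 < i ∧ i < p ^ (m + 1)}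
      {i | 0 < i ∧ i < p ^ (m + 1)} :=
    fun _ ⟨h0, h⟩ ↦ ⟨Nat.pos_of_ne_zero (mt (rotDigits_eq_zero_iff h).1 h0.ne'), rotDigits_lt h⟩
  obtain ⟨h0, hlt⟩ := hmaps.iterate (m + 1) ⟨hj0, hj⟩
  have hpow : p ^ (m + 1) * j ≡ j [MOD p ^ (m + 1) - 1] := by
    simpa using (Nat.modEq_sub (Nat.one_le_of_lt hj)).mul_right j
  exact ((rotDigits_iterate_modEq hj (m + 1)).trans hpow).eq_of_pos_of_le h0 (by omega) hj0
    (by omega)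

lemma zeroOrPow_pow_rotDigits {M₀ : Type*} [MonoidWithZero M₀] {α : M₀ˣ}
    (hα : orderOf α = p ^ (m + 1) - 1) (hj : j < p ^ (m + 1)) :
    zeroOrPow α j ^ p = zeroOrPow α (rotDigits p m j) :=
  zeroOrPow_pow (fun h ↦ by simp [h] at hj) (rotDigits_eq_zero_iff hj).symm
    (hα ▸ rotDigits_modEq hj)

end RotDigits

lemma gpI_eq_of_le_of_lt {x : ℝ} (hx : x ≠ 1) {a : ℕ} (h1 : (a : ℝ) ≤ p * x)
    (h2 : p * x < a + 1) : gpI p I x = if a ∈ I then p * x - a else a + 1 - p * x := by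
  have hfloor : ⌊(p : ℝ) * x⌋ = a :=
    Int.floor_eq_iff.2 ⟨by exact_mod_cast h1, by push_cast; exact h2⟩
  simp [gpI, hx, hfloor]

/-- The fixed point of `x ↦ N x - K`, or of `x ↦ K + 1 - N x` if `rev`. -/
noncomputable def branchFixedPt (N K : ℕ) (rev : Bool) : ℝ :=
  bif rev then ((K : ℝ) + 1) / (N + 1) else K / (N - 1)

lemma branchFixedPt_bounds {N K : ℕ} (hN : 1 < N) (hK : K < N) (rev : Bool) :
    (K : ℝ) / N ≤ branchFixedPt N K rev ∧
      (branchFixedPt N K rev < ((K : ℝ) + 1) / N ∨ branchFixedPt N K rev = 1 ∧ K + 1 = N) := by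
  have hN' : (1 : ℝ) < N := by exact_mod_cast hN
  have hK' : (K : ℝ) + 1 ≤ N := by exact_mod_cast hK
  have hK0 : (0 : ℝ) ≤ K := K.cast_nonneg
  cases rev
  · simp only [branchFixedPt, cond_false]
    refine ⟨div_le_div_of_nonneg_left hK0 (by linarith) (by linarith), ?_⟩
    rcases hK'.lt_or_eq with hlt | heq
    · left
      rw [div_lt_div_iff₀ (by linarith) (by linarith)]
      nlinarith
    · right
      refine ⟨?_, by exact_mod_cast heq⟩
      rw [← heq, add_sub_cancel_right, div_self (by linarith)]
  · simp only [branchFixedPt, cond_true]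
    refine ⟨?_, Or.inl (div_lt_div_of_pos_left (by linarith) (by linarith) (by linarith))⟩
    rw [div_le_div_iff₀ (by linarith) (by linarith)]
    nlinarith

variable (p I) in
/-- The fixed point of `g_{p,I}^n` on which `B_{α,I}` takes the value `α ^ j`. -/
noncomputable def fixedPt (n j : ℕ) : ℝ :=
  branchFixedPt (p ^ n) (piInv p I n j) (reversed p I n j)

section FixedPt

lemma fixedPt_bounds (hp : 1 < p) {n j : ℕ} (hn : n ≠ 0) (hj : j < p ^ n) :
    (piInv p I n j : ℝ) / p ^ n ≤ fixedPt p I n j ∧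
      (fixedPt p I n j < ((piInv p I n j : ℝ) + 1) / p ^ n ∨
        fixedPt p I n j = 1 ∧ piInv p I n j + 1 = p ^ n) := by
  exact_mod_cast branchFixedPt_bounds (Nat.one_lt_pow hn hp) (piInv_lt (I := I) hj)
    (reversed p I n j)

lemma fixedPt_mem_Icc (hp : 1 < p) {n j : ℕ} (hn : n ≠ 0) (hj : j < p ^ n) :
    fixedPt p I n j ∈ Set.Icc (0 : ℝ) 1 := by
  obtain ⟨hlow, hup⟩ := fixedPt_bounds (I := I) hp hn hj
  have hK : (piInv p I n j : ℝ) + 1 ≤ p ^ n := by exact_mod_cast piInv_lt (I := I) hj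
  refine ⟨(div_nonneg (Nat.cast_nonneg _) (by positivity)).trans hlow, ?_⟩
  rcases hup with hlt | ⟨heq, -⟩
  · exact hlt.le.trans ((div_le_one (by positivity)).2 hK)
  · exact heq.le

variable {m a t : ℕ}

lemma p_mul_fixedPt (hp : 1 < p) (ha : a < p) (ht : t < p ^ m) :
    (p : ℝ) * fixedPt p I (m + 1) (a * p ^ m + t) =
      if a ∈ I then a + fixedPt p I (m + 1) (p * t + a)
      else a + 1 - fixedPt p I (m + 1) (p * t + a) := by
  have hR := piInv_lt (I := I) ht
  have hpow : (p : ℝ) ^ (m + 1) = p * p ^ m := pow_succ' _ _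
  have hD : (p : ℝ) * p ^ m - 1 ≠ 0 := by
    rw [← hpow]
    exact (sub_pos.2 (by exact_mod_cast Nat.one_lt_pow m.succ_ne_zero hp)).ne'
  simp only [fixedPt, piInv_succ ht, reversed_succ ht, piInv_succ_low ht ha,
    reversed_succ_low ht ha]
  by_cases haI : a ∈ I <;> cases reversed p I m t <;>
    simp only [haI, branchFixedPt, reflectIf, decide_true, decide_false, not_true,
      not_false_eq_true, Bool.xor_false, Bool.false_xor, Bool.true_xor, Bool.not_true, cond_true,
      cond_false, if_true, if_false]
  all_goals
    push_cast [Nat.sub_sub, Nat.cast_sub (show 1 + piInv p I m t ≤ p ^ m by omega),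
      Nat.cast_sub (show 1 + a ≤ p by omega)]
    rw [hpow]
    field_simp
    ring

lemma fixedPt_mem_branch (hp : 1 < p) (ha : a < p) (ht : t < p ^ m) :
    (a : ℝ) ≤ p * fixedPt p I (m + 1) (a * p ^ m + t) ∧
      ((p : ℝ) * fixedPt p I (m + 1) (a * p ^ m + t) < a + 1 ∨
        fixedPt p I (m + 1) (a * p ^ m + t) = 1) := by
  obtain ⟨hlow, hup⟩ := fixedPt_bounds (I := I) hp m.succ_ne_zero (mul_pow_add_lt ha ht)
  have hr := reflectIf_lt (b := decide (a ∉ I)) (piInv_lt (I := I) ht)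
  rw [piInv_succ ht] at hlow hup
  set r := reflectIf (decide (a ∉ I)) (p ^ m) (piInv p I m t)
  have hP : (0 : ℝ) < p ^ m := by positivity
  have hr' : (r : ℝ) + 1 ≤ p ^ m := by exact_mod_cast hr
  have hpow : (p : ℝ) ^ (m + 1) = p * p ^ m := pow_succ' _ _
  push_cast at hlow hup
  rw [hpow] at hlow hup
  refine ⟨?_, hup.imp (fun h ↦ ?_) And.left⟩
  · rw [div_le_iff₀ (by positivity)] at hlow
    nlinarith
  · rw [lt_div_iff₀ (by positivity)] at h
    nlinarith

lemma gpI_fixedPt (hp : 1 < p) {j : ℕ} (hj : j < p ^ (m + 1)) :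
    gpI p I (fixedPt p I (m + 1) j) = fixedPt p I (m + 1) (rotDigits p m j) := by
  obtain ⟨a, ha, t, ht, rfl⟩ := exists_eq_mul_pow_add hj
  rw [rotDigits_mul_pow_add ht]
  have hxy := p_mul_fixedPt (I := I) hp ha ht
  obtain ⟨hy0, hy1⟩ := fixedPt_mem_Icc (I := I) hp m.succ_ne_zero
    (Nat.mul_add_lt_mul_of_lt_of_lt ht ha)
  obtain ⟨hlow, hup⟩ := fixedPt_mem_branch (I := I) hp ha ht
  have ha' : (a : ℝ) + 1 ≤ p := by exact_mod_cast ha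
  by_cases hx1 : fixedPt p I (m + 1) (a * p ^ m + t) = 1
  · -- `g` is defined separately at `1`; there `hxy` forces `a = p - 1`
    rw [hx1, mul_one] at hxy
    have hap : a = p - 1 := by
      have : (a : ℝ) + 1 = p := by split_ifs at hxy <;> linarith
      have : a + 1 = p := by exact_mod_cast this
      omega
    rw [hx1, gpI, if_pos rfl, ← hap]
    split_ifs at hxy ⊢ <;> linarith
  · rw [gpI_eq_of_le_of_lt hx1 hlow (hup.resolve_right hx1)]
    split_ifs at hxy ⊢ <;> linarith

lemma gpI_iterate_fixedPt (hp : 1 < p) {j : ℕ} (hj : j < p ^ (m + 1)) (i : ℕ) :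
    (gpI p I)^[i] (fixedPt p I (m + 1) j) = fixedPt p I (m + 1) ((rotDigits p m)^[i] j) := by
  induction i with
  | zero => rfl
  | succ i ih =>
    rw [Function.iterate_succ_apply', Function.iterate_succ_apply', ih,
      gpI_fixedPt hp (rotDigits_iterate_lt hj i)]

lemma gpI_iterate_fixedPt_self (hp : 1 < p) {j : ℕ} (hj : j < p ^ (m + 1)) :
    (gpI p I)^[m + 1] (fixedPt p I (m + 1) j) = fixedPt p I (m + 1) j := by
  rw [gpI_iterate_fixedPt hp hj, rotDigits_iterate_self hj]

end FixedPt

lemma strictMonoOn_fixedPt_piPowI (hp : 1 < p) {n : ℕ} (hn : n ≠ 0) :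
    StrictMonoOn (fun k ↦ fixedPt p I n (piPowI p I n k)) (Set.Iio (p ^ n)) := by
  have hbounds : ∀ {k}, k < p ^ n → (k : ℝ) / p ^ n ≤ fixedPt p I n (piPowI p I n k) ∧
      (fixedPt p I n (piPowI p I n k) < ((k : ℝ) + 1) / p ^ n ∨
        fixedPt p I n (piPowI p I n k) = 1 ∧ k + 1 = p ^ n) := fun hk ↦ by
    simpa only [piInv_piPowI hk] using fixedPt_bounds (I := I) hp hn (piPowI_lt (I := I) hk)
  intro k hk k' hk' hlt
  rcases (hbounds hk).2 with hup | ⟨-, hlast⟩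
  · refine hup.trans_le (le_trans ?_ (hbounds hk').1)
    gcongr
    exact_mod_cast hlt
  · exact absurd hk' (by simp only [Set.mem_Iio]; omega)

lemma eqOn_fixedPt_piPowI (hp : 1 < p) {m : ℕ} {x : ℕ → ℝ}
    (hmono : StrictMonoOn x (Set.Iio (p ^ (m + 1))))
    (himg : x '' Set.Iio (p ^ (m + 1)) =
      {y ∈ Set.Icc (0 : ℝ) 1 | (gpI p I)^[m + 1] y = y}) :
    Set.EqOn x (fun k ↦ fixedPt p I (m + 1) (piPowI p I (m + 1) k)) (Set.Iio (p ^ (m + 1))) := by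
  refine hmono.eqOn_of_image_subset (strictMonoOn_fixedPt_piPowI hp m.succ_ne_zero) ?_
  rintro _ ⟨k, hk, rfl⟩
  rw [himg]
  exact ⟨fixedPt_mem_Icc hp m.succ_ne_zero (piPowI_lt hk),
    gpI_iterate_fixedPt_self hp (piPowI_lt hk)⟩

end GpI

open GpI in
theorem bijection_B_alpha_I_general (p n : ℕ) [Fact p.Prime] (hn : 1 ≤ n)
    (I : Finset ℕ)
    (x : ℕ → ℝ) (hmono : StrictMonoOn x (Set.Iio (p ^ n)))
    (himg : x '' Set.Iio (p ^ n) = {y ∈ Set.Icc (0 : ℝ) 1 | (gpI p I)^[n] y = y})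
    (α : (GaloisField p n)ˣ) (hα : ∀ β : (GaloisField p n)ˣ, β ∈ Subgroup.zpowers α)
    (B : ℝ → GaloisField p n)
    (hB0 : ∀ k < p ^ n, piPowI p I n k = 0 → B (x k) = 0)
    (hBk : ∀ k < p ^ n, piPowI p I n k ≠ 0 →
      B (x k) = (α : GaloisField p n) ^ piPowI p I n k) :
    Set.BijOn B {y ∈ Set.Icc (0 : ℝ) 1 | (gpI p I)^[n] y = y} Set.univ ∧
    ∀ k < p ^ n, B (x k) ^ p = B (gpI p I (x k)) := by
  obtain ⟨m, rfl⟩ : ∃ m, n = m + 1 := ⟨n - 1, by omega⟩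
  have hp : 1 < p := (Fact.out : p.Prime).one_lt
  have hcard : Nat.card (GaloisField p (m + 1)) = p ^ (m + 1) :=
    GaloisField.card p _ m.succ_ne_zero
  have hx := eqOn_fixedPt_piPowI hp hmono himg
  have hBx : Set.EqOn (B ∘ x) (zeroOrPow α ∘ piPowI p I (m + 1)) (Set.Iio (p ^ (m + 1))) := by
    intro k hk
    by_cases h0 : piPowI p I (m + 1) k = 0
    · simp [zeroOrPow, h0, hB0 k hk h0]
    · simp [zeroOrPow, h0, hBk k hk h0]
  refine ⟨?_, fun k hk ↦ ?_⟩
  · rw [← himg, ← Set.bijOn_comp_iff hmono.injOn]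
    exact ((hcard ▸ zeroOrPow_bijOn hα).comp (bijOn_piPowI _)).congr hBx.symm
  · have hj := piPowI_lt (I := I) hk
    obtain ⟨k', hk', hk'j⟩ := (bijOn_piPowI (I := I) (m + 1)).surjOn (rotDigits_lt hj)
    have hgx : gpI p I (x k) = x k' := by
      rw [hx hk, hx hk']
      exact (gpI_fixedPt hp hj).trans (congrArg _ hk'j.symm)
    calc B (x k) ^ p = zeroOrPow α (piPowI p I (m + 1) k) ^ p := congrArg (· ^ p) (hBx hk)
      _ = zeroOrPow α (piPowI p I (m + 1) k') := by
        rw [hk'j]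
        exact zeroOrPow_pow_rotDigits (hcard ▸ orderOf_eq_natCard_sub_one hα) hj
      _ = B (gpI p I (x k)) := by rw [hgx]; exact (hBx hk').symm

/-- Theorem: with `x_0 < x_1 < ⋯ < x_{p^n−1}` the fixed points of `g_{p,I}^n` and `α` a
generator of the multiplicative group of `F_{p^n}`, the map `B_{α,I}` sending the fixed
point `x_k` with `π_{p^n,I}(k) = 0` to `0` and `x_k` to `α^{π_{p^n,I}(k)}` otherwise is
a bijection onto `F_{p^n}` satisfying `(B_{α,I}(x_k))^p = B_{α,I}(g_{p,I}(x_k))` for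
every fixed point `x_k`. -/
theorem bijection_B_alpha_I (p n : ℕ) [Fact p.Prime] (hn : 1 ≤ n)
    (I : Finset ℕ) (hI : ∀ i ∈ I, i < p)
    (x : ℕ → ℝ) (hmono : StrictMonoOn x (Set.Iio (p ^ n)))
    (himg : x '' Set.Iio (p ^ n) = {y ∈ Set.Icc (0 : ℝ) 1 | (gpI p I)^[n] y = y})
    (α : (GaloisField p n)ˣ) (hα : ∀ β : (GaloisField p n)ˣ, β ∈ Subgroup.zpowers α)
    (B : ℝ → GaloisField p n)
    (hB0 : ∀ k < p ^ n, piPowI p I n k = 0 → B (x k) = 0)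
    (hBk : ∀ k < p ^ n, piPowI p I n k ≠ 0 →
      B (x k) = (α : GaloisField p n) ^ piPowI p I n k) :
    Set.BijOn B {y ∈ Set.Icc (0 : ℝ) 1 | (gpI p I)^[n] y = y} Set.univ ∧
    ∀ k < p ^ n, B (x k) ^ p = B (gpI p I (x k)) :=
  bijection_B_alpha_I_general p n hn I x hmono himg α hα B hB0 hBk
end
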